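/- arXiv:1905.09707 — 3 statements merged into one kernel-verified Lean document; each statement's English description precedes it below -/
import Mathlib

section
/- (Probabilistic form of Theorem 1, accuracy enhancement without feedback.) Assume the Protocol 1 model with parameters ε, ε_c ∈ [0,1], τ > 0, σ_c ∈ (0, τ), σ > 0, μ > 0, an integer m ≥ 1 with μ = (m + 1/2)·τ, and P(X₁ ∈ (μ − σ/2, μ + σ/2)) ≥ 1 − ε with σ < 2μ/3. Let j ≥ 1 be an integer with j < (τ − σ_c)/(σ_c + σ) and j·σ ≥ μ/(m + 3/2). Then with probability at least 1 − j·ε − (j+1)·ε_c one has t^out_j − t^out_0 ∈ (j·μ − j·σ_c/2, j·μ + j·σ_c/2); consequently, the (j·ε + (j+1)·ε_c)-inaccuracy of the j-th output tick time t^out_j − t^out_0 satisfies Σ^out_j(j·ε + (j+1)·ε_c) ≤ j·σ_c/μ ≤ (5j²/6)·(σ/μ)·(2σ_c/τ). -/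
open MeasureTheory ProbabilityTheory Pointwise

/-- A Markov kernel `κ` from `ℝ` to `ℝ` satisfies the `(τ, σc, εc)`-**stability
criterion** if for every switch-on phase `s ∈ (−(τ−σc)/2, (τ−σc)/2)`, the waiting-time
distribution `κ(s)` assigns probability at least `1 − εc` to the set of waiting times
`y` with `y + s ∈ ((τ−σc)/2, (τ+σc)/2)`. -/
def StabilityCriterion (κ : Kernel ℝ ℝ) (τ σc εc : ℝ) : Prop :=
  ∀ s ∈ Set.Ioo (-((τ - σc) / 2)) ((τ - σc) / 2),
    ENNReal.ofReal (1 - εc) ≤ κ s {y | y + s ∈ Set.Ioo ((τ - σc) / 2) ((τ + σc) / 2)}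

/-- The phase of a period-`τ` clock at time `x`: the unique `s ∈ (−τ/2, τ/2]` such
that `x − s` is an integer multiple of `τ`. -/
noncomputable def phase (τ x : ℝ) : ℝ := x - τ * ⌈x / τ - 1 / 2⌉

/-- The σ-algebra generated by the input waiting times `X` together with the output
tick times `tout 0, …, tout (i−1)`; the conditioning σ-algebra for the `i`-th draw of
the enhancing clock in Protocol 1. -/
def protocolPast {Ω : Type*} [MeasurableSpace Ω] (X : ℕ → Ω → ℝ)
    (tout : ℕ → Ω → ℝ) (i : ℕ) : MeasurableSpace Ω :=
  (⨆ k, MeasurableSpace.comap (X k) inferInstance) ⊔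
    ⨆ l, ⨆ (_ : l < i), MeasurableSpace.comap (tout l) inferInstance

/-- The switch-on phase of the enhancing clock at the arrival of the `i`-th
(relevant) input tick in Protocol 1:  `s₀ = 0` (the clock starts in the reset state),
and for `i ≥ 1`, `sᵢ = t^in_i − t^out_{i−1} − mᵢ·τ` with `mᵢ` the unique integer making
`sᵢ ∈ (−τ/2, τ/2]`. -/
noncomputable def protocolPhase {Ω : Type*} (τ : ℝ) (tin tout : ℕ → Ω → ℝ)
    (i : ℕ) (ω : Ω) : ℝ :=
  if i = 0 then 0 else phase τ (tin i ω - tout (i - 1) ω)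

/-- **The Protocol 1 model** (accuracy enhancement without feedback).  It consists of:
(i) an i.i.d. sequence `(X_k)` of a.s. positive real random variables (input tick
waiting times) whose common distribution puts weight at least `1 − ε` on
`(μ − σ/2, μ + σ/2)`, with input tick times `u_k = X_1 + ⋯ + X_k`;
(ii) a Markov kernel `κ` satisfying the `(τ, σc, εc)`-stability criterion of the
enhancing clock, whose detector-off evolution has period `τ = μ/(m + 1/2)`;
(iii) random variables `t^in_0 = 0, t^in_1, …, t^in_j` and `t^out_0, …, t^out_j` such
that conditionally on `(X_k)` the waiting time `t^out_0` has law `κ(0)`, and for each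
`1 ≤ i ≤ j`, `t^in_i = min{u_k : u_k > t^out_{i−1}}` and, conditionally on `(X_k)` and
`t^out_0, …, t^out_{i−1}`, the increment `t^out_i − t^in_i` has law `κ(sᵢ)` where `sᵢ`
is the phase of `t^in_i − t^out_{i−1}` modulo `τ`. -/
structure Protocol1Model {Ω : Type*} [MeasurableSpace Ω] (P : Measure Ω)
    (ε εc τ σc σ μ : ℝ) (m : ℕ) (κ : Kernel ℝ ℝ)
    (X : ℕ → Ω → ℝ) (tin tout : ℕ → Ω → ℝ) (j : ℕ) : Prop where
  hε : ε ∈ Set.Icc (0 : ℝ) 1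
  hεc : εc ∈ Set.Icc (0 : ℝ) 1
  hτ : 0 < τ
  hσc : σc ∈ Set.Ioo 0 τ
  hσ : 0 < σ
  hμ : 0 < μ
  hm : 1 ≤ m
  hμτ : μ = (m + 1 / 2) * τ
  measX : ∀ k, Measurable (X k)
  meas_tin : ∀ i, Measurable (tin i)
  meas_tout : ∀ i, Measurable (tout i)
  indep : iIndepFun X P
  ident : ∀ k, IdentDistrib (X k) (X 0) P P
  pos : ∀ k, ∀ᵐ ω ∂P, 0 < X k ω
  conf : ENNReal.ofReal (1 - ε) ≤ P {ω | X 0 ω ∈ Set.Ioo (μ - σ / 2) (μ + σ / 2)}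
  markov : IsMarkovKernel κ
  stable : StabilityCriterion κ τ σc εc
  tin_zero : ∀ ω, tin 0 ω = 0
  tin_def : ∀ i, 1 ≤ i → i ≤ j → ∀ ω,
    tin i ω = sInf {t | (∃ k, t = ∑ l ∈ Finset.range k, X l ω) ∧ tout (i - 1) ω < t}
  cond_law : ∀ i ≤ j, ∀ B : Set ℝ, MeasurableSet B →
    ∀ A : Set Ω, MeasurableSet[protocolPast X tout i] A →
      P (A ∩ {ω | tout i ω - tin i ω ∈ B}) =
        ∫⁻ ω in A, κ (protocolPhase τ tin tout i ω) B ∂P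

/-- The `ε`-inaccuracy `Σ_j(ε)` of a random variable `S` interpreted as the time of the
`j`-th tick of a clock: the infimum of `j·σ/μ` over all `μ > 0` and `σ ≥ 0` such that
`S` lies in `[μ − σ/2, μ + σ/2]` with probability at least `1 − ε`; it is `+∞` if no
such pair exists. -/
noncomputable def inaccuracy {Ω : Type*} [MeasurableSpace Ω] (P : Measure Ω)
    (S : Ω → ℝ) (j : ℕ) (ε : ℝ) : ENNReal :=
  ⨅ (μ : ℝ) (σ : ℝ) (_ : 0 < μ) (_ : 0 ≤ σ)
    (_ : ENNReal.ofReal (1 - ε) ≤ P {ω | S ω ∈ Set.Icc (μ - σ / 2) (μ + σ / 2)}),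
    ENNReal.ofReal (j * σ / μ)

/-!
Call an outcome good up to step `i` if the input waiting times `X 0, …, X (j-1)` lie in
`(μ - σ/2, μ + σ/2)`, the first output tick lies in the stability window
`((τ - σc)/2, (τ + σc)/2)`, and the first `i` output increments lie in `(μ - σc/2, μ + σc/2)`.
On such an outcome the lag `t^out_i - u_i` stays within `(σc + i (σ + σc))/2` of `τ/2`, so the
next input tick is `u_{i+1}` and, since `μ = (m + 1/2) τ` and `j (σc + σ) < τ - σc`, its phase
`u_{i+1} - t^out_i - m τ` lies in the stability window. The conditional law of the next draw
and the stability criterion then keep the outcome good for one more step with conditional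
probability at least `1 - εc`. The input windows fail with probability at most `j ε`, each of the
`j + 1` draws with probability at most `εc`, and on a good outcome the `j` increments add up to
`t^out_j - t^out_0 ∈ (j μ - j σc/2, j μ + j σc/2)`.
-/

open Set

section CondLaw

variable {Ω α β : Type*} {𝓕 mΩ : MeasurableSpace Ω} [MeasurableSpace α] [MeasurableSpace β]
  {P : Measure Ω} {κ : Kernel α β} {S : Ω → α} {Y : Ω → β} {A₀ : Set Ω}

lemma map_prodMk_restrict_eq_compProd [IsFiniteMeasure P] [IsSFiniteKernel κ]
    (h𝓕 : 𝓕 ≤ mΩ) (hS : Measurable[𝓕] S) (hY : Measurable Y)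
    (hcond : ∀ B, MeasurableSet B → ∀ A, MeasurableSet[𝓕] A → A ⊆ A₀ →
      P (A ∩ Y ⁻¹' B) = ∫⁻ ω in A, κ (S ω) B ∂P) (hA₀ : MeasurableSet[𝓕] A₀) :
    (P.restrict A₀).map (fun ω => (S ω, Y ω)) = (P.restrict A₀).map S ⊗ₘ κ := by
  have hS' : Measurable S := hS.mono h𝓕 le_rfl
  refine Measure.ext_prod fun {s t} hs ht => ?_
  rw [Measure.map_apply (hS'.prodMk hY) (hs.prod ht), Measure.compProd_apply_prod hs ht,
    setLIntegral_map hs (κ.measurable_coe ht) hS', Measure.restrict_restrict (hS' hs),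
    Measure.restrict_apply (hS'.prodMk hY (hs.prod ht)),
    ← hcond t ht _ ((hS hs).inter hA₀) inter_subset_right]
  congr 1
  ext ω
  simp only [mem_preimage, mem_prod, mem_inter_iff]
  tauto

lemma measure_inter_prodMk_mem_eq_lintegral [IsFiniteMeasure P] [IsSFiniteKernel κ]
    (h𝓕 : 𝓕 ≤ mΩ) (hS : Measurable[𝓕] S) (hY : Measurable Y)
    (hcond : ∀ B, MeasurableSet B → ∀ A, MeasurableSet[𝓕] A → A ⊆ A₀ →
      P (A ∩ Y ⁻¹' B) = ∫⁻ ω in A, κ (S ω) B ∂P) (hA₀ : MeasurableSet[𝓕] A₀)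
    {C : Set (α × β)} (hC : MeasurableSet C) :
    P (A₀ ∩ {ω | (S ω, Y ω) ∈ C}) = ∫⁻ ω in A₀, κ (S ω) (Prod.mk (S ω) ⁻¹' C) ∂P := by
  have hS' : Measurable S := hS.mono h𝓕 le_rfl
  have h := DFunLike.congr_fun (map_prodMk_restrict_eq_compProd h𝓕 hS hY hcond hA₀) C
  rwa [Measure.map_apply (hS'.prodMk hY) hC, Measure.restrict_apply (hS'.prodMk hY hC),
    Measure.compProd_apply hC, lintegral_map (Kernel.measurable_kernel_prodMk_left hC) hS',
    inter_comm] at h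

lemma mul_measure_le_measure_inter_prodMk_mem [IsFiniteMeasure P] [IsSFiniteKernel κ]
    (h𝓕 : 𝓕 ≤ mΩ) (hS : Measurable[𝓕] S) (hY : Measurable Y)
    (hcond : ∀ B, MeasurableSet B → ∀ A, MeasurableSet[𝓕] A → A ⊆ A₀ →
      P (A ∩ Y ⁻¹' B) = ∫⁻ ω in A, κ (S ω) B ∂P) (hA₀ : MeasurableSet[𝓕] A₀)
    {C : Set (α × β)} (hC : MeasurableSet C) {c : ENNReal}
    (hc : ∀ ω ∈ A₀, c ≤ κ (S ω) (Prod.mk (S ω) ⁻¹' C)) :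
    c * P A₀ ≤ P (A₀ ∩ {ω | (S ω, Y ω) ∈ C}) := by
  rw [measure_inter_prodMk_mem_eq_lintegral h𝓕 hS hY hcond hA₀ hC, ← setLIntegral_const]
  exact setLIntegral_mono
    ((Kernel.measurable_kernel_prodMk_left hC).comp (hS.mono h𝓕 le_rfl)) hc

end CondLaw

lemma csInf_setOf_exists_eq_and_lt {u : ℕ → ℝ} (hu : Monotone u) {a : ℝ} {i : ℕ}
    (hi : u i ≤ a) (ha : a < u (i + 1)) : sInf {t | (∃ k, t = u k) ∧ a < t} = u (i + 1) := by
  refine IsLeast.csInf_eq ⟨⟨⟨i + 1, rfl⟩, ha⟩, ?_⟩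
  rintro _ ⟨⟨k, rfl⟩, hk⟩
  rcases le_or_gt k i with h | h
  · exact absurd ((hu h).trans hi) hk.not_ge
  · exact hu h

lemma sub_mem_Ioo_mul_of_forall_sub_mem_Ioo {t : ℕ → ℝ} {a b : ℝ} {n : ℕ} (hn : 1 ≤ n)
    (h : ∀ l < n, t (l + 1) - t l ∈ Ioo a b) : t n - t 0 ∈ Ioo (n * a) (n * b) := by
  induction n, hn using Nat.le_induction with
  | base => simpa using h 0 one_pos
  | succ n hn ih =>
    obtain ⟨hlo, hhi⟩ := ih fun l hl => h l (by omega)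
    obtain ⟨hlo', hhi'⟩ := h n n.lt_succ_self
    push_cast
    constructor <;> linarith

lemma phase_eq_sub_of_mem_Ioc {τ x : ℝ} (hτ : 0 < τ) (k : ℤ)
    (h : x - k * τ ∈ Ioc (-(τ / 2)) (τ / 2)) : phase τ x = x - k * τ := by
  have hceil : ⌈x / τ - 1 / 2⌉ = k := by
    rw [Int.ceil_eq_iff]
    obtain ⟨h1, h2⟩ := h
    constructor
    · rw [lt_sub_iff_add_lt, lt_div_iff₀ hτ]; linarith
    · rw [sub_le_iff_le_add, div_le_iff₀ hτ]; linarith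
  rw [phase, hceil, mul_comm]

section Trajectory

variable {x t : ℕ → ℝ} {μ σ σc τ : ℝ} {i : ℕ}

lemma abs_sub_sum_range_sub_lt (hx : ∀ k < i, x k ∈ Ioo (μ - σ / 2) (μ + σ / 2))
    (ht₀ : t 0 ∈ Ioo ((τ - σc) / 2) ((τ + σc) / 2))
    (ht : ∀ l < i, t (l + 1) - t l ∈ Ioo (μ - σc / 2) (μ + σc / 2)) :
    |t i - ∑ k ∈ Finset.range i, x k - τ / 2| < (σc + i * (σ + σc)) / 2 := by
  induction i with
  | zero =>
    obtain ⟨h1, h2⟩ := ht₀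
    rw [abs_lt]; simp only [Finset.range_zero, Finset.sum_empty, CharP.cast_eq_zero]
    constructor <;> linarith
  | succ i ih =>
    have hd := abs_lt.1 (ih (fun k hk => hx k (by omega)) fun l hl => ht l (by omega))
    obtain ⟨hx1, hx2⟩ := hx i i.lt_succ_self
    obtain ⟨ht1, ht2⟩ := ht i i.lt_succ_self
    rw [abs_lt, Finset.sum_range_succ]
    push_cast
    constructor <;> linarith [hd.1, hd.2]

lemma sum_range_lt_and_sub_mem_Ioo {m : ℕ} (hμ : μ = (m + 1 / 2) * τ)
    (hx : ∀ k < i + 1, x k ∈ Ioo (μ - σ / 2) (μ + σ / 2))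
    (ht₀ : t 0 ∈ Ioo ((τ - σc) / 2) ((τ + σc) / 2))
    (ht : ∀ l < i, t (l + 1) - t l ∈ Ioo (μ - σc / 2) (μ + σc / 2))
    (hi : (i + 1) * (σc + σ) < τ - σc) :
    ∑ k ∈ Finset.range i, x k < t i ∧
      ∑ k ∈ Finset.range (i + 1), x k - t i - m * τ ∈ Ioo (-((τ - σc) / 2)) ((τ - σc) / 2) := by
  have hd := abs_lt.1 (abs_sub_sum_range_sub_lt (fun k hk => hx k (by omega)) ht₀ ht)
  obtain ⟨hx1, hx2⟩ := hx i i.lt_succ_self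
  have hσ : 0 < σ := by linarith
  have hσc : 0 < σc := by linarith [ht₀.1, ht₀.2]
  rw [Finset.sum_range_succ, hμ] at *
  refine ⟨by nlinarith, by constructor <;> nlinarith⟩

end Trajectory

def protocolGoodEvent {Ω : Type*} (X tout : ℕ → Ω → ℝ) (τ σc σ μ : ℝ) (j i : ℕ) : Set Ω :=
  {ω | (∀ k, 0 < X k ω) ∧ (∀ k < j, X k ω ∈ Ioo (μ - σ / 2) (μ + σ / 2)) ∧
    tout 0 ω ∈ Ioo ((τ - σc) / 2) ((τ + σc) / 2) ∧
    ∀ l < i, tout (l + 1) ω - tout l ω ∈ Ioo (μ - σc / 2) (μ + σc / 2)}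

lemma mem_protocolGoodEvent_succ {Ω : Type*} {X tout : ℕ → Ω → ℝ} {τ σc σ μ : ℝ} {j i : ℕ}
    {ω : Ω} : ω ∈ protocolGoodEvent X tout τ σc σ μ j (i + 1) ↔
      ω ∈ protocolGoodEvent X tout τ σc σ μ j i ∧
        tout (i + 1) ω - tout i ω ∈ Ioo (μ - σc / 2) (μ + σc / 2) := by
  simp only [protocolGoodEvent, mem_ofPred_eq, Nat.forall_lt_succ_right, and_assoc]

lemma protocolGoodEvent_subset {Ω : Type*} {X tout : ℕ → Ω → ℝ} {τ σc σ μ : ℝ} {j : ℕ}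
    (hj : 1 ≤ j) :
    protocolGoodEvent X tout τ σc σ μ j j ⊆
      {ω | tout j ω - tout 0 ω ∈ Ioo (j * μ - j * σc / 2) (j * μ + j * σc / 2)} := by
  intro ω hω
  have h := sub_mem_Ioo_mul_of_forall_sub_mem_Ioo (t := fun l => tout l ω) hj hω.2.2.2
  simp only [mul_sub, mul_add, mul_div_assoc] at h ⊢
  exact h

section ProtocolPast

variable {Ω : Type*} [mΩ : MeasurableSpace Ω] {X tout : ℕ → Ω → ℝ}

lemma protocolPast_le (hX : ∀ k, Measurable (X k)) (htout : ∀ l, Measurable (tout l)) (i : ℕ) :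
    protocolPast X tout i ≤ mΩ :=
  sup_le (iSup_le fun k => (hX k).comap_le) (iSup₂_le fun l _ => (htout l).comap_le)

lemma measurable_X_protocolPast (i k : ℕ) : Measurable[protocolPast X tout i] (X k) :=
  Measurable.of_comap_le ((le_iSup (fun k => MeasurableSpace.comap (X k) _) k).trans le_sup_left)

lemma measurable_tout_protocolPast {i l : ℕ} (hl : l < i) :
    Measurable[protocolPast X tout i] (tout l) :=
  Measurable.of_comap_le ((le_iSup₂ (f := fun l (_ : l < i) =>
    MeasurableSpace.comap (tout l) _) l hl).trans le_sup_right)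

lemma measurableSet_protocolGoodEvent (τ σc σ μ : ℝ) (j i : ℕ) :
    MeasurableSet[protocolPast X tout (i + 1)] (protocolGoodEvent X tout τ σc σ μ j i) := by
  simp only [protocolGoodEvent, ofPred_and, ofPred_forall]
  refine .inter (.iInter fun k => ?_) (.inter (.iInter fun k => .iInter fun _ => ?_)
    (.inter ?_ (.iInter fun l => .iInter fun hl => ?_)))
  · exact measurableSet_lt measurable_const (measurable_X_protocolPast _ k)
  · exact measurable_X_protocolPast _ k measurableSet_Ioo
  · exact measurable_tout_protocolPast i.succ_pos measurableSet_Ioo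
  · exact ((measurable_tout_protocolPast (by omega)).sub
      (measurable_tout_protocolPast (by omega))) measurableSet_Ioo

end ProtocolPast

namespace Protocol1Model

variable {Ω : Type*} [MeasurableSpace Ω] {P : Measure Ω} {ε εc τ σc σ μ : ℝ} {m : ℕ}
  {κ : Kernel ℝ ℝ} {X tin tout : ℕ → Ω → ℝ} {j i : ℕ}

lemma sum_range_lt_and_sub_mem_Ioo_of_mem_protocolGoodEvent
    (hmodel : Protocol1Model P ε εc τ σc σ μ m κ X tin tout j)
    (hjτ : j * (σc + σ) < τ - σc) (hi : i < j) {ω : Ω}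
    (hω : ω ∈ protocolGoodEvent X tout τ σc σ μ j i) :
    ∑ k ∈ Finset.range i, X k ω < tout i ω ∧
      ∑ k ∈ Finset.range (i + 1), X k ω - tout i ω - m * τ ∈
        Ioo (-((τ - σc) / 2)) ((τ - σc) / 2) := by
  obtain ⟨-, hX, ht₀, ht⟩ := hω
  have hij : (i + 1 : ℝ) ≤ j := by exact_mod_cast hi
  refine sum_range_lt_and_sub_mem_Ioo (x := fun k => X k ω) (t := fun l => tout l ω) (i := i)
    hmodel.hμτ (fun k hk => hX k (by omega)) ht₀ ht ?_
  nlinarith [hmodel.hσ, hmodel.hσc.1]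

lemma tin_succ_eq (hmodel : Protocol1Model P ε εc τ σc σ μ m κ X tin tout j)
    (hjτ : j * (σc + σ) < τ - σc) (hi : i < j) {ω : Ω}
    (hω : ω ∈ protocolGoodEvent X tout τ σc σ μ j i) :
    tin (i + 1) ω = ∑ k ∈ Finset.range (i + 1), X k ω := by
  obtain ⟨hlt, hlag, -⟩ := hmodel.sum_range_lt_and_sub_mem_Ioo_of_mem_protocolGoodEvent hjτ hi hω
  have hmτ : τ ≤ m * τ :=
    le_mul_of_one_le_left hmodel.hτ.le (by exact_mod_cast hmodel.hm)
  have hmono : Monotone fun n => ∑ k ∈ Finset.range n, X k ω :=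
    monotone_nat_of_le_succ fun n => by
      simpa [Finset.sum_range_succ] using (hω.1 n).le
  rw [hmodel.tin_def (i + 1) i.succ_pos hi ω, Nat.add_sub_cancel]
  exact csInf_setOf_exists_eq_and_lt hmono hlt.le (by linarith [hmodel.hσc.1, hmodel.hτ])

lemma protocolPhase_succ_eq (hmodel : Protocol1Model P ε εc τ σc σ μ m κ X tin tout j)
    (hjτ : j * (σc + σ) < τ - σc) (hi : i < j) {ω : Ω}
    (hω : ω ∈ protocolGoodEvent X tout τ σc σ μ j i) :
    protocolPhase τ tin tout (i + 1) ω = ∑ k ∈ Finset.range (i + 1), X k ω - tout i ω - m * τ := by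
  obtain ⟨-, hl, hr⟩ := hmodel.sum_range_lt_and_sub_mem_Ioo_of_mem_protocolGoodEvent hjτ hi hω
  have hσc := hmodel.hσc.1
  rw [protocolPhase, if_neg i.succ_ne_zero, Nat.add_sub_cancel, hmodel.tin_succ_eq hjτ hi hω]
  exact_mod_cast phase_eq_sub_of_mem_Ioc hmodel.hτ m ⟨by push_cast; linarith, by push_cast; linarith⟩

lemma one_sub_le_measureReal_tout_zero [IsProbabilityMeasure P]
    (hmodel : Protocol1Model P ε εc τ σc σ μ m κ X tin tout j) :
    1 - εc ≤ P.real (tout 0 ⁻¹' Ioo ((τ - σc) / 2) ((τ + σc) / 2)) := by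
  have hlaw := hmodel.cond_law 0 j.zero_le (Ioo ((τ - σc) / 2) ((τ + σc) / 2)) measurableSet_Ioo
    univ .univ
  simp only [univ_inter, protocolPhase, if_pos, hmodel.tin_zero, sub_zero,
    measure_univ, mul_one, Measure.restrict_univ, lintegral_const] at hlaw
  have hstab := hmodel.stable 0 ⟨by linarith [hmodel.hσc.2], by linarith [hmodel.hσc.2]⟩
  simp only [add_zero, ofPred_mem_eq] at hstab
  rw [measureReal_def, ← ENNReal.ofReal_le_iff_le_toReal (measure_ne_top _ _)]
  exact hstab.trans_eq hlaw.symm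

lemma measureReal_X_notMem_le [IsProbabilityMeasure P]
    (hmodel : Protocol1Model P ε εc τ σc σ μ m κ X tin tout j) (k : ℕ) :
    P.real (X k ⁻¹' (Ioo (μ - σ / 2) (μ + σ / 2))ᶜ) ≤ ε := by
  have hconf := (ENNReal.ofReal_le_iff_le_toReal (measure_ne_top _ _)).1 hmodel.conf
  rw [measureReal_def, (hmodel.ident k).measure_mem_eq measurableSet_Ioo.compl, preimage_compl,
    ← measureReal_def, probReal_compl_eq_one_sub (hmodel.measX 0 measurableSet_Ioo)]
  exact sub_le_comm.1 hconf

lemma one_sub_le_measureReal_protocolGoodEvent_zero [IsProbabilityMeasure P]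
    (hmodel : Protocol1Model P ε εc τ σc σ μ m κ X tin tout j) :
    1 - j * ε - εc ≤ P.real (protocolGoodEvent X tout τ σc σ μ j 0) := by
  set I := Ioo (μ - σ / 2) (μ + σ / 2)
  set J := Ioo ((τ - σc) / 2) ((τ + σc) / 2)
  set Bpos := {ω | ¬∀ k, 0 < X k ω}
  set BX := ⋃ k ∈ Finset.range j, X k ⁻¹' Iᶜ
  set B₀ := tout 0 ⁻¹' Jᶜ
  have hsub : (protocolGoodEvent X tout τ σc σ μ j 0)ᶜ ⊆ Bpos ∪ BX ∪ B₀ := by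
    intro ω hω
    by_contra h
    simp only [Bpos, BX, B₀, mem_union, mem_compl_iff, mem_ofPred_eq, mem_iUnion, mem_preimage,
      Finset.mem_range, exists_prop, not_or, not_not, not_exists, not_and] at h
    exact hω ⟨h.1.1, h.1.2, h.2, fun l hl => absurd hl l.not_lt_zero⟩
  have hpos : P.real Bpos = 0 :=
    (measureReal_eq_zero_iff (measure_ne_top P _)).2 (ae_iff.1 (ae_all_iff.2 hmodel.pos))
  have hX : P.real BX ≤ j * ε := calc
    P.real BX ≤ ∑ k ∈ Finset.range j, P.real (X k ⁻¹' Iᶜ) := measureReal_biUnion_finset_le _ _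
    _ ≤ ∑ k ∈ Finset.range j, ε := Finset.sum_le_sum fun k _ => hmodel.measureReal_X_notMem_le k
    _ = j * ε := by rw [Finset.sum_const, Finset.card_range, nsmul_eq_mul]
  have hJ : P.real B₀ ≤ εc := by
    rw [show B₀ = (tout 0 ⁻¹' J)ᶜ from rfl,
      probReal_compl_eq_one_sub (hmodel.meas_tout 0 measurableSet_Ioo)]
    linarith [hmodel.one_sub_le_measureReal_tout_zero]
  have hG : MeasurableSet (protocolGoodEvent X tout τ σc σ μ j 0) :=
    protocolPast_le hmodel.measX hmodel.meas_tout 1 _ (measurableSet_protocolGoodEvent _ _ _ _ _ _)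
  have h₁ := measureReal_mono (μ := P) hsub
  have h₂ := measureReal_union_le (μ := P) (Bpos ∪ BX) B₀
  have h₃ := measureReal_union_le (μ := P) Bpos BX
  rw [probReal_compl_eq_one_sub hG] at h₁
  linarith

lemma mul_measureReal_protocolGoodEvent_le_succ [IsProbabilityMeasure P]
    (hmodel : Protocol1Model P ε εc τ σc σ μ m κ X tin tout j)
    (hjτ : j * (σc + σ) < τ - σc) (hi : i < j) :
    (1 - εc) * P.real (protocolGoodEvent X tout τ σc σ μ j i) ≤
      P.real (protocolGoodEvent X tout τ σc σ μ j (i + 1)) := by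
  have := hmodel.markov
  set G := protocolGoodEvent X tout τ σc σ μ j i
  set S : Ω → ℝ := fun ω => ∑ k ∈ Finset.range (i + 1), X k ω - tout i ω - m * τ
  set Y : Ω → ℝ := fun ω => tout (i + 1) ω - tin (i + 1) ω
  set C : Set (ℝ × ℝ) := {p | p.2 + p.1 ∈ Ioo ((τ - σc) / 2) ((τ + σc) / 2)}
  have hpast := protocolPast_le hmodel.measX hmodel.meas_tout (i + 1)
  have hS : Measurable[protocolPast X tout (i + 1)] S :=
    ((Finset.measurable_sum _ fun k _ => measurable_X_protocolPast _ k).sub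
      (measurable_tout_protocolPast i.lt_succ_self)).sub_const _
  have hcond : ∀ B, MeasurableSet B → ∀ A, MeasurableSet[protocolPast X tout (i + 1)] A →
      A ⊆ G → P (A ∩ Y ⁻¹' B) = ∫⁻ ω in A, κ (S ω) B ∂P := by
    intro B hB A hA hAG
    refine (hmodel.cond_law (i + 1) hi B hB A hA).trans ?_
    exact setLIntegral_congr_fun (hpast _ hA) fun ω hω => by
      rw [hmodel.protocolPhase_succ_eq hjτ hi (hAG hω)]
  have hlow : ENNReal.ofReal (1 - εc) * P G ≤ P (G ∩ {ω | (S ω, Y ω) ∈ C}) :=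
    mul_measure_le_measure_inter_prodMk_mem hpast hS
      ((hmodel.meas_tout _).sub (hmodel.meas_tin _)) hcond
      (measurableSet_protocolGoodEvent _ _ _ _ _ _)
      ((measurable_snd.add measurable_fst) measurableSet_Ioo) fun ω hω =>
        hmodel.stable _ (hmodel.sum_range_lt_and_sub_mem_Ioo_of_mem_protocolGoodEvent hjτ hi hω).2
  have hsub : G ∩ {ω | (S ω, Y ω) ∈ C} ⊆ protocolGoodEvent X tout τ σc σ μ j (i + 1) := by
    rintro ω ⟨hω, ⟨hl, hr⟩⟩
    simp only [S, Y, hmodel.tin_succ_eq hjτ hi hω] at hl hr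
    refine mem_protocolGoodEvent_succ.2 ⟨hω, ?_, ?_⟩ <;> rw [hmodel.hμτ] <;> linarith
  calc (1 - εc) * P.real G = (ENNReal.ofReal (1 - εc) * P G).toReal := by
        rw [ENNReal.toReal_mul, ENNReal.toReal_ofReal (by linarith [hmodel.hεc.2]), measureReal_def]
    _ ≤ P.real (G ∩ {ω | (S ω, Y ω) ∈ C}) := ENNReal.toReal_mono (measure_ne_top _ _) hlow
    _ ≤ _ := measureReal_mono hsub

lemma one_sub_le_measureReal_protocolGoodEvent [IsProbabilityMeasure P]
    (hmodel : Protocol1Model P ε εc τ σc σ μ m κ X tin tout j)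
    (hjτ : j * (σc + σ) < τ - σc) :
    ∀ i ≤ j, 1 - j * ε - (i + 1) * εc ≤ P.real (protocolGoodEvent X tout τ σc σ μ j i)
  | 0, _ => by simpa using hmodel.one_sub_le_measureReal_protocolGoodEvent_zero
  | i + 1, hi => by
    have ih := one_sub_le_measureReal_protocolGoodEvent hmodel hjτ i (by omega)
    have hstep := hmodel.mul_measureReal_protocolGoodEvent_le_succ hjτ hi
    have hle : P.real (protocolGoodEvent X tout τ σc σ μ j i) ≤ 1 := measureReal_le_one
    push_cast
    nlinarith [hmodel.hεc.1]

end Protocol1Model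

lemma inaccuracy_le_of_le_measure {Ω : Type*} [MeasurableSpace Ω] {P : Measure Ω} {S : Ω → ℝ}
    {j : ℕ} {ε μ σ : ℝ} (hμ : 0 < μ) (hσ : 0 ≤ σ)
    (h : ENNReal.ofReal (1 - ε) ≤ P {ω | S ω ∈ Icc (μ - σ / 2) (μ + σ / 2)}) :
    inaccuracy P S j ε ≤ ENNReal.ofReal (j * σ / μ) :=
  iInf₂_le_of_le μ σ (iInf₂_le_of_le hμ hσ (iInf_le _ h))

lemma mul_div_le_enhancement_bound {τ σc σ μ : ℝ} {m j : ℕ} (hτ : 0 < τ) (hσc : 0 ≤ σc)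
    (hm : 1 ≤ m) (hμτ : μ = (m + 1 / 2) * τ) (hjσ : μ / (m + 3 / 2) ≤ j * σ) :
    j * σc / μ ≤ (5 * j ^ 2 / 6) * (σ / μ) * (2 * σc / τ) := by
  have hm' : (1 : ℝ) ≤ m := by exact_mod_cast hm
  have hμ : 0 < μ := by rw [hμτ]; positivity
  have hτσ : 3 * τ ≤ 5 * (j * σ) := by
    rw [div_le_iff₀ (by positivity), hμτ] at hjσ
    nlinarith
  calc j * σc / μ = j * σc / μ * 1 := (mul_one _).symm
    _ ≤ j * σc / μ * (5 * (j * σ) / (3 * τ)) :=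
        mul_le_mul_of_nonneg_left ((one_le_div (by positivity)).2 hτσ) (by positivity)
    _ = (5 * j ^ 2 / 6) * (σ / μ) * (2 * σc / τ) := by field_simp; ring

theorem protocol1_accuracy_enhancement_general {Ω : Type*} [MeasurableSpace Ω]
    (P : Measure Ω) [IsProbabilityMeasure P]
    (ε εc τ σc σ μ : ℝ) (m : ℕ) (κ : Kernel ℝ ℝ)
    (X : ℕ → Ω → ℝ) (tin tout : ℕ → Ω → ℝ) (j : ℕ)
    (hmodel : Protocol1Model P ε εc τ σc σ μ m κ X tin tout j)
    (hj : 1 ≤ j)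
    (hjlt : (j : ℝ) < (τ - σc) / (σc + σ))
    (hjσ : μ / (m + 3 / 2) ≤ j * σ) :
    ENNReal.ofReal (1 - j * ε - (j + 1) * εc) ≤
        P {ω | tout j ω - tout 0 ω ∈
          Set.Ioo (j * μ - j * σc / 2) (j * μ + j * σc / 2)} ∧
      inaccuracy P (fun ω => tout j ω - tout 0 ω) j (j * ε + (j + 1) * εc) ≤
        ENNReal.ofReal (j * σc / μ) ∧
      j * σc / μ ≤ (5 * j ^ 2 / 6) * (σ / μ) * (2 * σc / τ) := by
  have hjτ : j * (σc + σ) < τ - σc :=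
    (lt_div_iff₀ (by linarith [hmodel.hσc.1, hmodel.hσ])).1 hjlt
  have hprob : ENNReal.ofReal (1 - j * ε - (j + 1) * εc) ≤
      P {ω | tout j ω - tout 0 ω ∈ Ioo (j * μ - j * σc / 2) (j * μ + j * σc / 2)} := by
    rw [ENNReal.ofReal_le_iff_le_toReal (measure_ne_top _ _)]
    exact (hmodel.one_sub_le_measureReal_protocolGoodEvent hjτ j le_rfl).trans
      (measureReal_mono (protocolGoodEvent_subset hj))
  have hj₀ : (0 : ℝ) < j := by exact_mod_cast hj
  refine ⟨hprob, ?_, mul_div_le_enhancement_bound hmodel.hτ hmodel.hσc.1.le hmodel.hm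
    hmodel.hμτ hjσ⟩
  calc inaccuracy P (fun ω => tout j ω - tout 0 ω) j (j * ε + (j + 1) * εc)
      ≤ ENNReal.ofReal (j * (j * σc) / (j * μ)) := by
        refine inaccuracy_le_of_le_measure (mul_pos hj₀ hmodel.hμ)
          (mul_nonneg hj₀.le hmodel.hσc.1.le) ?_
        rw [← sub_sub]
        exact hprob.trans (measure_mono fun ω hω => Ioo_subset_Icc_self hω)
    _ = ENNReal.ofReal (j * σc / μ) := by rw [mul_div_mul_left _ _ hj₀.ne']

/-- **Accuracy enhancement without feedback** (probabilistic form of Theorem 1).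
Assume the Protocol 1 model with parameters `ε, εc ∈ [0,1]`, `τ > 0`, `σc ∈ (0, τ)`,
`σ > 0`, `μ > 0`, an integer `m ≥ 1` with `μ = (m + 1/2)·τ`, and
`P(X₁ ∈ (μ − σ/2, μ + σ/2)) ≥ 1 − ε` with `σ < 2μ/3`.  Let `j ≥ 1` be an integer with
`j < (τ − σc)/(σc + σ)` and `j·σ ≥ μ/(m + 3/2)`.  Then with probability at least
`1 − j·ε − (j+1)·εc` one has
`t^out_j − t^out_0 ∈ (j·μ − j·σc/2, j·μ + j·σc/2)`; consequently, the
`(j·ε + (j+1)·εc)`-inaccuracy of the `j`-th output tick time `t^out_j − t^out_0`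
satisfies `Σ^out_j(j·ε + (j+1)·εc) ≤ j·σc/μ ≤ (5j²/6)·(σ/μ)·(2σc/τ)`. -/
theorem protocol1_accuracy_enhancement {Ω : Type*} [MeasurableSpace Ω]
    (P : Measure Ω) [IsProbabilityMeasure P]
    (ε εc τ σc σ μ : ℝ) (m : ℕ) (κ : Kernel ℝ ℝ)
    (X : ℕ → Ω → ℝ) (tin tout : ℕ → Ω → ℝ) (j : ℕ)
    (hmodel : Protocol1Model P ε εc τ σc σ μ m κ X tin tout j)
    (hσμ : σ < 2 * μ / 3) (hj : 1 ≤ j)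
    (hjlt : (j : ℝ) < (τ - σc) / (σc + σ))
    (hjσ : μ / (m + 3 / 2) ≤ j * σ) :
    ENNReal.ofReal (1 - j * ε - (j + 1) * εc) ≤
        P {ω | tout j ω - tout 0 ω ∈
          Set.Ioo (j * μ - j * σc / 2) (j * μ + j * σc / 2)} ∧
      inaccuracy P (fun ω => tout j ω - tout 0 ω) j (j * ε + (j + 1) * εc) ≤
        ENNReal.ofReal (j * σc / μ) ∧
      j * σc / μ ≤ (5 * j ^ 2 / 6) * (σ / μ) * (2 * σc / τ) :=
  protocol1_accuracy_enhancement_general P ε εc τ σc σ μ m κ X tin tout j hmodel hj hjlt hjσ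
end

section
/- (Probabilistic form of Lemma 3: confidence interval of the output tick in the feedback protocol.) Let τ > 0, σ_c ∈ (0, τ), ε, ε_c ∈ [0,1], m ≥ 1 an integer, μ = m·τ, and σ > 0 with σ < τ − σ_c. Let t^in be a positive random variable with P(t^in ∈ (μ − σ/2, μ + σ/2)) ≥ 1 − ε, let κ be a Markov kernel from ℝ to ℝ satisfying the (τ, σ_c, ε_c)-stability criterion, and let t^out = t^in + Y, where conditionally on t^in = x the variable Y has law κ(s(x)), with s(x) = x − m(x)·τ and m(x) the unique integer such that s(x) ∈ (−τ/2, τ/2]. Then P( t^in ∈ (μ − σ/2, μ + σ/2) and t^out ∈ (μ + (τ−σ_c)/2, μ + (τ+σ_c)/2) ) ≥ (1 − ε)(1 − ε_c). -/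
open MeasureTheory ProbabilityTheory

lemma phase_measurable (τ : ℝ) : Measurable (phase τ) := by
  unfold phase
  exact measurable_id.sub (measurable_const.mul (measurable_from_top.comp (((measurable_id.div_const τ).sub_const _).ceil)))

lemma phase_eq {τ σ x : ℝ} (m : ℕ) (hτ : 0 < τ) (hσ : 0 < σ) (hστ : σ < τ)
    (hx : x ∈ Set.Ioo ((m : ℝ) * τ - σ / 2) ((m : ℝ) * τ + σ / 2)) :
    phase τ x = x - m * τ := by
  have : ⌈x / τ - 1 / 2⌉ = (m : ℤ) := by
    rw [Int.ceil_eq_iff]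
    have h1 : (m : ℝ) * τ - σ / 2 < x := hx.1
    have h2 : x < (m : ℝ) * τ + σ / 2 := hx.2
    constructor
    · have : ((m:ℝ) - 1/2) * τ < x := by nlinarith
      have := (div_lt_div_iff_of_pos_right hτ).mpr this
      rw [mul_div_cancel_right₀ _ (ne_of_gt hτ)] at this
      push_cast
      linarith
    · have : x / τ < (m : ℝ) + 1 / 2 := by
        rw [div_lt_iff₀ hτ]; nlinarith
      push_cast
      linarith
  rw [phase, this]
  push_cast
  ring

/-- **Confidence interval of the output tick in the feedback protocol**
(probabilistic form of Lemma 3).  Let `τ > 0`, `σc ∈ (0, τ)`, `ε, εc ∈ [0,1]`,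
`m ≥ 1` an integer, `μ = m·τ`, and `σ > 0` with `σ < τ − σc`.  Let `t^in` be a positive
random variable with `P(t^in ∈ (μ − σ/2, μ + σ/2)) ≥ 1 − ε`, let `κ` be a Markov kernel
satisfying the `(τ, σc, εc)`-stability criterion, and let `t^out = t^in + Y`, where
conditionally on `t^in = x` the variable `Y` has law `κ(s(x))` with `s(x)` the phase of
`x` modulo `τ`.  Then
`P(t^in ∈ (μ − σ/2, μ + σ/2) ∧ t^out ∈ (μ + (τ−σc)/2, μ + (τ+σc)/2)) ≥ (1 − ε)(1 − εc)`. -/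
theorem feedback_confidence_interval {Ω : Type*} [MeasurableSpace Ω]
    (P : Measure Ω) [IsProbabilityMeasure P]
    (ε εc τ σc σ μ : ℝ) (m : ℕ) (κ : Kernel ℝ ℝ) [IsMarkovKernel κ]
    (tin tout : Ω → ℝ) (htin : Measurable tin) (htout : Measurable tout)
    (hε : ε ∈ Set.Icc (0 : ℝ) 1) (hεc : εc ∈ Set.Icc (0 : ℝ) 1)
    (hτ : 0 < τ) (hσc : σc ∈ Set.Ioo 0 τ)
    (hm : 1 ≤ m) (hμ : μ = m * τ)
    (hσ : 0 < σ) (hστ : σ < τ - σc)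
    (hpos : ∀ᵐ ω ∂P, 0 < tin ω)
    (hconf : ENNReal.ofReal (1 - ε) ≤ P {ω | tin ω ∈ Set.Ioo (μ - σ / 2) (μ + σ / 2)})
    (hstable : StabilityCriterion κ τ σc εc)
    (hcond : ∀ B : Set ℝ, MeasurableSet B →
      ∀ A : Set Ω, MeasurableSet[MeasurableSpace.comap tin inferInstance] A →
        P (A ∩ {ω | tout ω - tin ω ∈ B}) = ∫⁻ ω in A, κ (phase τ (tin ω)) B ∂P) :
    ENNReal.ofReal ((1 - ε) * (1 - εc)) ≤
      P {ω | tin ω ∈ Set.Ioo (μ - σ / 2) (μ + σ / 2) ∧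
        tout ω ∈ Set.Ioo (μ + (τ - σc) / 2) (μ + (τ + σc) / 2)} := by
  set I := Set.Ioo (μ - σ / 2) (μ + σ / 2) with hI
  set J := Set.Ioo (μ + (τ - σc) / 2) (μ + (τ + σc) / 2) with hJ
  have hφ : Measurable (phase τ) := phase_measurable τ
  set κ' : Kernel ℝ ℝ := κ.comap (phase τ) hφ with hκ'
  have hpair : Measurable (fun ω => (tin ω, tout ω - tin ω)) :=
    htin.prodMk (htout.sub htin)
  set ν1 : Measure (ℝ × ℝ) := P.map (fun ω => (tin ω, tout ω - tin ω)) with hν1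
  set ν2 : Measure (ℝ × ℝ) := (P.map tin) ⊗ₘ κ' with hν2
  have : IsProbabilityMeasure (P.map tin) := Measure.isProbabilityMeasure_map htin.aemeasurable
  have hν12 : ν1 = ν2 := by
    refine ext_of_generate_finite _ generateFrom_prod.symm isPiSystem_prod ?_ ?_
    · rintro _ ⟨S, hS, B, hB, rfl⟩
      simp only [Set.mem_setOf_eq] at hS hB
      rw [hν1, Measure.map_apply hpair (hS.prod hB), hν2,
        Measure.compProd_apply_prod hS hB]
      have hpre : (fun ω => (tin ω, tout ω - tin ω)) ⁻¹' (S ×ˢ B) =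
          tin ⁻¹' S ∩ {ω | tout ω - tin ω ∈ B} := by
        ext ω; simp [Set.mem_prod]
      rw [hpre, hcond B hB _ ⟨S, hS, rfl⟩,
        setLIntegral_map hS (Kernel.measurable_coe κ' hB) htin]
      simp only [hκ', Kernel.comap_apply]
    · rw [hν1, hν2]
      simp [Measure.map_apply hpair MeasurableSet.univ]
  set C : Set (ℝ × ℝ) := {p : ℝ × ℝ | p.1 ∈ I ∧ p.1 + p.2 ∈ J} with hC
  have hCmeas : MeasurableSet C := by
    apply MeasurableSet.inter
    · exact measurable_fst measurableSet_Ioo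
    · exact (measurable_fst.add measurable_snd) measurableSet_Ioo
  have hEvent : {ω | tin ω ∈ I ∧ tout ω ∈ J} =
      (fun ω => (tin ω, tout ω - tin ω)) ⁻¹' C := by
    ext ω
    simp only [hC, Set.mem_setOf_eq, Set.mem_preimage]
    rw [show tin ω + (tout ω - tin ω) = tout ω by ring]
  rw [hEvent, ← Measure.map_apply hpair hCmeas, ← hν1, hν12, hν2,
    Measure.compProd_apply hCmeas]
  have hbound : ∀ x ∈ I, ENNReal.ofReal (1 - εc) ≤ κ' x (Prod.mk x ⁻¹' C) := by
    intro x hx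
    have hx' : x ∈ Set.Ioo ((m : ℝ) * τ - σ / 2) ((m : ℝ) * τ + σ / 2) := by
      rw [← hμ]; exact hx
    have hph : phase τ x = x - μ := by
      rw [hμ]; exact phase_eq m hτ hσ (by linarith [hσc.1]) hx'
    have hs : x - μ ∈ Set.Ioo (-((τ - σc) / 2)) ((τ - σc) / 2) := by
      constructor
      · have := hx.1; linarith
      · have := hx.2; linarith
    have hst := hstable (x - μ) hs
    rw [hκ', Kernel.comap_apply, hph]
    refine hst.trans (measure_mono ?_)
    intro y hy
    simp only [Set.mem_setOf_eq, Set.mem_Ioo] at hy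
    simp only [hC, Set.mem_preimage, Set.mem_setOf_eq]
    refine ⟨hx, ?_⟩
    simp only [hJ, Set.mem_Ioo]
    constructor <;> linarith [hy.1, hy.2]
  calc ENNReal.ofReal ((1 - ε) * (1 - εc))
      = ENNReal.ofReal (1 - ε) * ENNReal.ofReal (1 - εc) :=
        ENNReal.ofReal_mul (by linarith [hε.2])
    _ ≤ P.map tin I * ENNReal.ofReal (1 - εc) := by
        gcongr
        rw [Measure.map_apply htin measurableSet_Ioo]
        exact hconf
    _ = ∫⁻ _ in I, ENNReal.ofReal (1 - εc) ∂(P.map tin) := by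
        rw [setLIntegral_const, mul_comm]
    _ ≤ ∫⁻ x in I, κ' x (Prod.mk x ⁻¹' C) ∂(P.map tin) :=
        setLIntegral_mono (Kernel.measurable_kernel_prodMk_left hCmeas) hbound
    _ ≤ ∫⁻ x, κ' x (Prod.mk x ⁻¹' C) ∂(P.map tin) :=
        setLIntegral_le_lintegral _ _
end

section
/- (Hoeffding confidence interval for the j-th tick of an i.i.d. clock.) Let X₁, …, X_j be i.i.d. real-valued random variables, and let μ₁ ∈ ℝ, σ₁ > 0, ε ∈ [0,1) be such that the interval C₁ = [μ₁ − σ₁/2, μ₁ + σ₁/2] satisfies P(X₁ ∈ C₁) ≥ 1 − ε (in particular P(X₁ ∈ C₁) > 0). Let μ' = E[X₁ | X₁ ∈ C₁] denote the conditional expectation of X₁ given the event {X₁ ∈ C₁}. Then for every real n > 0, P( X₁ + ⋯ + X_j ∈ [ j·μ' − n·√j·σ₁/2 , j·μ' + n·√j·σ₁/2 ] ) ≥ (1 − ε)^j · (1 − 2·e^{−n²/2}). -/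
/-!
Condition on the event `A` that `X₁, …, X_j` all fall in `C₁`. Since `A` is an intersection of
events each depending on a single `Xᵢ`, under `P[·|A]` the `Xᵢ` stay independent and each has the
law of `X₁` conditioned on `C₁`: values in an interval of length `σ₁` and mean `μ'`. Hoeffding's
inequality then bounds the conditional probability that the sum leaves the interval by
`2e^{-n²/2}`, and `P(A) = P(X₁ ∈ C₁)^j ≥ (1 - ε)^j`.
-/

open MeasureTheory ProbabilityTheory Finset

namespace ProbabilityTheory

variable {Ω β : Type*} [MeasurableSpace Ω] [MeasurableSpace β] {μ : Measure Ω}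

lemma IdentDistrib.cond_preimage {Ω' : Type*} [MeasurableSpace Ω'] {ν : Measure Ω'}
    {f : Ω → β} {g : Ω' → β} (h : IdentDistrib f g μ ν) (hf : Measurable f) (hg : Measurable g)
    {C : Set β} (hC : MeasurableSet C) :
    IdentDistrib f g μ[|f ⁻¹' C] ν[|g ⁻¹' C] where
  aemeasurable_fst := hf.aemeasurable
  aemeasurable_snd := hg.aemeasurable
  map_eq := by
    ext E hE
    rw [Measure.map_apply hf hE, Measure.map_apply hg hE, cond_apply (hf hC),
      cond_apply (hg hC), ← Set.preimage_inter, ← Set.preimage_inter, h.measure_mem_eq hC,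
      h.measure_mem_eq (hC.inter hE)]

lemma integral_cond {E : Type*} [NormedAddCommGroup E] [NormedSpace ℝ E] (f : Ω → E)
    (s : Set Ω) : ∫ ω, f ω ∂μ[|s] = (μ.real s)⁻¹ • ∫ ω in s, f ω ∂μ := by
  rw [cond, integral_smul_measure, ENNReal.toReal_inv, measureReal_def]

section Fintype

variable {ι : Type*} [Fintype ι] {X : ι → Ω → β}

lemma measure_iInter_preimage_eq_pow {Y : Ω → β} (hindep : iIndepFun X μ)
    (hident : ∀ i, IdentDistrib (X i) Y μ μ) {C : Set β} (hC : MeasurableSet C) :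
    μ (⋂ i, X i ⁻¹' C) = μ (Y ⁻¹' C) ^ Fintype.card ι := by
  rw [hindep.meas_iInter fun i ↦ ⟨C, hC, rfl⟩, ← Finset.card_univ, ← Finset.prod_const]
  exact Finset.prod_congr rfl fun i _ ↦ (hident i).measure_mem_eq hC

lemma iIndepFun.cond_iInter_preimage (hX : ∀ i, Measurable (X i)) (hindep : iIndepFun X μ)
    {C : ι → Set β} (hC : ∀ i, MeasurableSet (C i)) (hpos : ∀ i, μ (X i ⁻¹' C i) ≠ 0) :
    iIndepFun X μ[|⋂ i, X i ⁻¹' C i] :=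
  iIndepFun.cond hX (hindep.comp (fun _ x ↦ (x, x)) fun _ ↦ measurable_id.prodMk measurable_id)
    hpos hC

lemma identDistrib_cond_iInter_preimage (hX : ∀ i, Measurable (X i)) (hindep : iIndepFun X μ)
    {C : ι → Set β} (hC : ∀ i, MeasurableSet (C i)) (hpos : ∀ i, μ (X i ⁻¹' C i) ≠ 0) (i : ι) :
    IdentDistrib (X i) (X i) μ[|⋂ k, X k ⁻¹' C k] μ[|X i ⁻¹' C i] where
  aemeasurable_fst := (hX i).aemeasurable
  aemeasurable_snd := (hX i).aemeasurable
  map_eq := by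
    ext E hE
    have := cond_iInter (s := {i}) (f := fun k ↦ X k ⁻¹' E) hX
      (hindep.comp (fun _ x ↦ (x, x)) fun _ ↦ measurable_id.prodMk measurable_id)
      (fun k _ ↦ ⟨E, hE, rfl⟩) (fun k _ ↦ hpos k) hC
    simpa [Measure.map_apply (hX i) hE] using this

end Fintype

lemma measureReal_sum_mem_Icc_ge_of_iIndepFun {ι : Type*} [IsProbabilityMeasure μ]
    {X : ι → Ω → ℝ} (hindep : iIndepFun X μ) (hX : ∀ i, AEMeasurable (X i) μ) {a b : ℝ}
    (hb : ∀ i, ∀ᵐ ω ∂μ, X i ω ∈ Set.Icc a b) (s : Finset ι) {t : ℝ} (ht : 0 ≤ t) :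
    1 - 2 * Real.exp (-t ^ 2 / (2 * #s * ((b - a) / 2) ^ 2)) ≤
      μ.real {ω | ∑ i ∈ s, X i ω ∈ Set.Icc (∑ i ∈ s, μ[X i] - t) (∑ i ∈ s, μ[X i] + t)} := by
  set Y : ι → Ω → ℝ := fun i ω ↦ X i ω - μ[X i]
  have hY : ∀ i, HasSubgaussianMGF (Y i) ((‖b - a‖₊ / 2) ^ 2) μ := fun i ↦
    hasSubgaussianMGF_of_mem_Icc (hX i) (hb i)
  have hindepY : iIndepFun Y μ :=
    hindep.comp (fun i (x : ℝ) ↦ x - ∫ ω, X i ω ∂μ) fun _ ↦ measurable_id.sub_const _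
  have hexp : -t ^ 2 / (2 * ↑(∑ i ∈ s, (‖b - a‖₊ / 2) ^ 2 : NNReal)) =
      -t ^ 2 / (2 * #s * ((b - a) / 2) ^ 2) := by
    simp [mul_assoc, div_pow, sq_abs]
  have hupper := HasSubgaussianMGF.measure_sum_ge_le_of_iIndepFun hindepY (s := s)
    (fun i _ ↦ hY i) ht
  have hlower := HasSubgaussianMGF.measure_sum_ge_le_of_iIndepFun (s := s)
    (hindepY.comp (fun _ x ↦ -x) fun _ ↦ measurable_neg) (fun i _ ↦ (hY i).neg) ht
  rw [hexp] at hupper hlower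
  set I := {ω | ∑ i ∈ s, X i ω ∈ Set.Icc (∑ i ∈ s, μ[X i] - t) (∑ i ∈ s, μ[X i] + t)}
  set U := {ω | t ≤ ∑ i ∈ s, Y i ω}
  set L := {ω | t ≤ ∑ i ∈ s, ((fun x ↦ -x) ∘ Y i) ω}
  have hcover : Set.univ ⊆ I ∪ U ∪ L := by
    intro ω _
    simp only [I, U, L, Y, Function.comp, Finset.sum_sub_distrib, Finset.sum_neg_distrib,
      Set.mem_union, Set.mem_ofPred_eq, Set.mem_Icc]
    by_contra! h
    linarith [h.1.1 (by linarith [h.2]), h.2]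
  have := calc 1 = μ.real Set.univ := probReal_univ.symm
    _ ≤ μ.real (I ∪ U ∪ L) := measureReal_mono hcover
    _ ≤ μ.real I + μ.real U + μ.real L :=
      (measureReal_union_le _ _).trans (by gcongr; exact measureReal_union_le _ _)
  linarith

lemma measureReal_cond_sum_mem_Icc_ge {ι : Type*} [Fintype ι] [IsProbabilityMeasure μ]
    {X : ι → Ω → ℝ} {Y : Ω → ℝ} (hX : ∀ i, Measurable (X i)) (hY : Measurable Y)
    (hindep : iIndepFun X μ) (hident : ∀ i, IdentDistrib (X i) Y μ μ) {a b : ℝ}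
    (hpos : μ (Y ⁻¹' Set.Icc a b) ≠ 0) {t : ℝ} (ht : 0 ≤ t) :
    1 - 2 * Real.exp (-t ^ 2 / (2 * Fintype.card ι * ((b - a) / 2) ^ 2)) ≤
      μ[|⋂ i, X i ⁻¹' Set.Icc a b].real {ω | ∑ i, X i ω ∈
        Set.Icc (Fintype.card ι * μ[|Y ⁻¹' Set.Icc a b][Y] - t)
          (Fintype.card ι * μ[|Y ⁻¹' Set.Icc a b][Y] + t)} := by
  have hC : MeasurableSet (Set.Icc a b) := measurableSet_Icc
  have hposX : ∀ i, μ (X i ⁻¹' Set.Icc a b) ≠ 0 := fun i ↦ (hident i).measure_mem_eq hC ▸ hpos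
  have hA : μ (⋂ i, X i ⁻¹' Set.Icc a b) ≠ 0 := by
    rw [measure_iInter_preimage_eq_pow hindep hident hC]
    exact pow_ne_zero _ hpos
  have : IsProbabilityMeasure μ[|⋂ i, X i ⁻¹' Set.Icc a b] := cond_isProbabilityMeasure hA
  have hmean : ∀ i, μ[|⋂ k, X k ⁻¹' Set.Icc a b][X i] = μ[|Y ⁻¹' Set.Icc a b][Y] := fun i ↦
    ((identDistrib_cond_iInter_preimage hX hindep (fun _ ↦ hC) hposX i).trans
      ((hident i).cond_preimage (hX i) hY hC)).integral_eq
  have hsupp : ∀ i, ∀ᵐ ω ∂μ[|⋂ k, X k ⁻¹' Set.Icc a b], X i ω ∈ Set.Icc a b := fun i ↦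
    (ae_cond_mem (.iInter fun k ↦ hX k hC)).mono fun ω hω ↦ Set.mem_iInter.1 hω i
  simpa [hmean] using measureReal_sum_mem_Icc_ge_of_iIndepFun
    (iIndepFun.cond_iInter_preimage hX hindep (fun _ ↦ hC) hposX)
    (fun i ↦ (hX i).aemeasurable) hsupp Finset.univ ht

end ProbabilityTheory

/-- **Hoeffding confidence interval for the `j`-th tick of an i.i.d. clock.**
Let `X₁, …, X_j` be i.i.d. real random variables and let `μ₁ ∈ ℝ`, `σ₁ > 0`,
`ε ∈ [0,1)` be such that the interval `C₁ = [μ₁ − σ₁/2, μ₁ + σ₁/2]` satisfies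
`P(X₁ ∈ C₁) ≥ 1 − ε` (in particular `P(X₁ ∈ C₁) > 0`).  Let
`μ' = E[X₁ | X₁ ∈ C₁]` be the conditional expectation of `X₁` given `{X₁ ∈ C₁}`.
Then for every real `n > 0`,
`P(X₁ + ⋯ + X_j ∈ [j·μ' − n·√j·σ₁/2, j·μ' + n·√j·σ₁/2]) ≥ (1 − ε)^j·(1 − 2e^{−n²/2})`. -/
theorem hoeffding_confidence_interval {Ω : Type*} [MeasurableSpace Ω]
    (P : Measure Ω) [IsProbabilityMeasure P] (X : ℕ → Ω → ℝ) (j : ℕ) (hj : 1 ≤ j)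
    (hmeas : ∀ k, Measurable (X k))
    (hindep : iIndepFun X P)
    (hident : ∀ k, IdentDistrib (X k) (X 0) P P)
    (μ₁ σ₁ ε : ℝ) (hσ₁ : 0 < σ₁) (hε : ε ∈ Set.Ico (0 : ℝ) 1)
    (hconf : ENNReal.ofReal (1 - ε) ≤
      P {ω | X 0 ω ∈ Set.Icc (μ₁ - σ₁ / 2) (μ₁ + σ₁ / 2)})
    (μ' : ℝ)
    (hμ' : μ' = (∫ ω in {ω | X 0 ω ∈ Set.Icc (μ₁ - σ₁ / 2) (μ₁ + σ₁ / 2)}, X 0 ω ∂P) /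
      (P {ω | X 0 ω ∈ Set.Icc (μ₁ - σ₁ / 2) (μ₁ + σ₁ / 2)}).toReal)
    (n : ℝ) (hn : 0 < n) :
    ENNReal.ofReal ((1 - ε) ^ j * (1 - 2 * Real.exp (-n ^ 2 / 2))) ≤
      P {ω | (∑ i ∈ Finset.range j, X i ω) ∈
        Set.Icc (j * μ' - n * Real.sqrt j * σ₁ / 2)
          (j * μ' + n * Real.sqrt j * σ₁ / 2)} := by
  set A := ⋂ i : Fin j, X i ⁻¹' Set.Icc (μ₁ - σ₁ / 2) (μ₁ + σ₁ / 2)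
  have hA : MeasurableSet A := .iInter fun i ↦ hmeas i measurableSet_Icc
  have hindepFin : iIndepFun (fun i : Fin j ↦ X i) P := hindep.precomp Fin.val_injective
  have hε' : 0 ≤ 1 - ε := by linarith [hε.2]
  have hPA : ENNReal.ofReal ((1 - ε) ^ j) ≤ P A := by
    rw [measure_iInter_preimage_eq_pow hindepFin (fun i ↦ hident i) measurableSet_Icc,
      Fintype.card_fin, ENNReal.ofReal_pow hε']
    exact pow_le_pow_left₀ zero_le hconf j
  have hpos : P (X 0 ⁻¹' Set.Icc (μ₁ - σ₁ / 2) (μ₁ + σ₁ / 2)) ≠ 0 :=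
    (lt_of_lt_of_le (by simpa using hε.2) hconf).ne'
  have hmean : P[|X 0 ⁻¹' Set.Icc (μ₁ - σ₁ / 2) (μ₁ + σ₁ / 2)][X 0] = μ' := by
    rw [integral_cond, hμ', smul_eq_mul, inv_mul_eq_div]
    rfl
  have hexp : -(n * √j * σ₁ / 2) ^ 2 / (2 * j * (σ₁ / 2) ^ 2) = -n ^ 2 / 2 := by
    have hj' : (j : ℝ) ≠ 0 := Nat.cast_ne_zero.2 (by omega)
    rw [div_pow, mul_pow, mul_pow, Real.sq_sqrt (Nat.cast_nonneg j)]
    field_simp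
  have hhoeff : 1 - 2 * Real.exp (-n ^ 2 / 2) ≤ P[|A].real {ω | ∑ i ∈ Finset.range j, X i ω ∈
      Set.Icc (j * μ' - n * √j * σ₁ / 2) (j * μ' + n * √j * σ₁ / 2)} := by
    simpa [Fintype.card_fin, hmean, hexp, Finset.sum_range] using
      measureReal_cond_sum_mem_Icc_ge (fun i : Fin j ↦ hmeas i) (hmeas 0) hindepFin
        (fun i ↦ hident i) hpos (t := n * √j * σ₁ / 2) (by positivity)
  calc ENNReal.ofReal ((1 - ε) ^ j * (1 - 2 * Real.exp (-n ^ 2 / 2)))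
      = ENNReal.ofReal ((1 - ε) ^ j) * ENNReal.ofReal (1 - 2 * Real.exp (-n ^ 2 / 2)) :=
        ENNReal.ofReal_mul (pow_nonneg hε' j)
    _ ≤ P A * P[|A] _ := by gcongr; exact ENNReal.ofReal_le_of_le_toReal hhoeff
    _ = P (A ∩ _) := by rw [mul_comm, cond_mul_eq_inter hA]
    _ ≤ _ := measure_mono Set.inter_subset_right
end
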